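/- arXiv:2603.29158 — 4 statements merged into one kernel-verified Lean document; each statement's English description precedes it below -/
import Mathlib

section
/- Let G be a group, H a subgroup of G of height at most n (meaning: for any n+1 conjugates g₀Hg₀⁻¹, …, gₙHgₙ⁻¹ with the cosets g₀H, …, gₙH pairwise distinct, the intersection ⋂ᵢ gᵢHgᵢ⁻¹ is finite). Suppose H has infinite index in G and there exists an infinite subgroup P ≤ G such that for every g ∈ G, the intersection gHg⁻¹ ∩ P has finite index in P. Then we reach a contradiction; i.e., no such H exists. Equivalently: if H ≤ G has finite height and infinite index, then there is no infinite subgroup P ≤ G with gHg⁻¹ ∩ P of finite index in P for all g ∈ G. -/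
/-- A subgroup of finite height and infinite index admits no
infinite subgroup `P` all of whose intersections with conjugates of `H` have
finite index in `P`. -/
theorem no_infinite_finite_index_intersector {G : Type*} [Group G]
    (H : Subgroup G) (n : ℕ)
    (hheight : ∀ g : Fin (n + 1) → G,
      Function.Injective (fun i => (QuotientGroup.mk (g i) : G ⧸ H)) →
      ((⨅ i, H.map (MulAut.conj (g i)).toMonoidHom : Subgroup G) : Set G).Finite)
    (hindex : H.index = 0)
    (P : Subgroup G) (hPinf : (P : Set G).Infinite)
    (hfi : ∀ g : G, (H.map (MulAut.conj g).toMonoidHom ⊓ P).relIndex P ≠ 0) :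
    False := by
  -- G ⧸ H is infinite
  have hquot : Infinite (G ⧸ H) := by
    rw [Subgroup.index, Nat.card_eq_zero] at hindex
    rcases hindex with h | h
    · exact (h.elim (QuotientGroup.mk 1 : G ⧸ H))
    · exact h
  -- choose n+1 elements with pairwise distinct cosets
  let e : ℕ ↪ G ⧸ H := Infinite.natEmbedding (G ⧸ H)
  let g : Fin (n + 1) → G := fun i => Quotient.out (e i)
  have hginj : Function.Injective (fun i => (QuotientGroup.mk (g i) : G ⧸ H)) := by
    intro i j hij
    refine Fin.val_injective (e.injective ?_)
    rw [← Quotient.out_eq' (e ↑i), ← Quotient.out_eq' (e ↑j)]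
    exact hij
  -- the intersection of the conjugates is finite
  set K : Subgroup G := ⨅ i, H.map (MulAut.conj (g i)).toMonoidHom with hK
  have hKfin : (K : Set G).Finite := hheight g hginj
  -- K has finite relative index in P
  have hrel : K.relIndex P ≠ 0 := by
    rw [hK]
    refine Subgroup.relIndex_iInf_ne_zero fun i => ?_
    have := hfi (g i)
    rwa [Subgroup.inf_relIndex_right] at this
  -- K.subgroupOf P is finite
  have hKfin' : Finite (K.subgroupOf P) := by
    have : Finite K := hKfin.to_subtype
    exact Finite.of_injective
      (fun x : K.subgroupOf P => (⟨(x : P), x.2⟩ : K))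
      (by intro x y hxy
          apply Subtype.ext; apply Subtype.ext
          exact congrArg (fun z : K => (z : G)) hxy)
  have hPinf' : Infinite P := hPinf.to_subtype
  have hcard := Subgroup.card_mul_index (K.subgroupOf P)
  have h0 : Nat.card P = 0 := Nat.card_eq_zero_of_infinite
  rw [h0] at hcard
  rcases Nat.mul_eq_zero.mp hcard with h | h
  · exact (Nat.card_pos).ne' h
  · exact hrel h
end

section
/- Let A and B be finitely generated infinite groups and let H be a subgroup of the direct product A × B. If H is a Morse subgroup of A × B, then H is either finite or of finite index in A × B. -/
/-!
Suppose `H` is infinite, so one of its projections, say to `A`, is infinite. For `h = (a, b) ∈ H`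
the path `1 → (a, 1) → h`, geodesic in each factor, is a uniform quasigeodesic, so `(a, 1)` stays
uniformly close to `H`; hence `H` contains elements with arbitrarily long `A`-coordinate and
bounded `B`-coordinate. Given `b ∈ B`, pick such an element `(x, y)` with `|x| ≥ 2|b| + const`:
the detour `1 → (1, b) → (x, b) → (x, y)` is again a uniform quasigeodesic, so `(1, b)` is
uniformly close to `H`. Then the `B`-projection of `H` is infinite too, the symmetric argument
puts `A × 1` close to `H`, and `A × B = (A × 1)(1 × B)` lies in a bounded neighbourhood of `H`,
which means finite index.

Quasigeodesics are recognised with the `ℓ¹` length `|g.1| + |g.2|` for the projected generating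
sets, which is bi-Lipschitz to the word length of `S`.
-/

section WordMetric

variable {G : Type*} [Group G]

/-- Word length of `g` with respect to a generating set `S` (letters from `S ∪ S⁻¹`). -/
noncomputable def wordLength (S : Set G) (g : G) : ℕ :=
  sInf {n : ℕ | ∃ f : Fin n → G, (∀ i, f i ∈ S ∨ (f i)⁻¹ ∈ S) ∧ (List.ofFn f).prod = g}

/-- Word metric associated to a generating set `S`. -/
noncomputable def wordDist (S : Set G) (g h : G) : ℝ :=
  (wordLength S (g⁻¹ * h) : ℝ)

/-- A discrete `(k, c)`-quasigeodesic in `G` for the word metric of `S`. -/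
def IsQuasiGeodesic (S : Set G) (k c : ℝ) {n : ℕ} (γ : Fin (n + 1) → G) : Prop :=
  ∀ i j : Fin (n + 1),
    (1 / k) * |(i : ℝ) - (j : ℝ)| - c ≤ wordDist S (γ i) (γ j) ∧
      wordDist S (γ i) (γ j) ≤ k * |(i : ℝ) - (j : ℝ)| + c

/-- `H` is a Morse (strongly quasiconvex) subgroup of `G` for the word metric of `S`. -/
def IsMorse (S : Set G) (H : Subgroup G) : Prop :=
  ∀ k c : ℝ, 1 ≤ k → 0 ≤ c → ∃ M : ℝ, ∀ (n : ℕ) (γ : Fin (n + 1) → G),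
    IsQuasiGeodesic S k c γ → γ 0 ∈ H → γ (Fin.last n) ∈ H →
      ∀ i, ∃ h ∈ H, wordDist S (γ i) h ≤ M

/-- `H` is a finitely generated undistorted subgroup of `G` for the word metric of `S`. -/
def Undistorted (S : Set G) (H : Subgroup G) : Prop :=
  ∃ T : Set H, T.Finite ∧ Subgroup.closure T = ⊤ ∧
    ∃ k c : ℝ, 1 ≤ k ∧ 0 ≤ c ∧
      ∀ h h' : H, wordDist T h h' ≤ k * wordDist S (h : G) (h' : G) + c

end WordMetric

open Pointwise

section WordLength

variable {G G' : Type*} [Group G] [Group G'] {S : Set G}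

theorem wordLength_prod_le_length {l : List G} (hl : ∀ x ∈ l, x ∈ S ∪ S⁻¹) :
    wordLength S l.prod ≤ l.length :=
  Nat.sInf_le ⟨l.get, fun i => hl _ (l.get_mem i), by rw [List.ofFn_get]⟩

theorem wordLength_le_one_of_mem {s : G} (hs : s ∈ S) : wordLength S s ≤ 1 := by
  simpa using wordLength_prod_le_length (S := S) (l := [s]) (by simp [hs])

@[simp]
theorem wordLength_one : wordLength S 1 = 0 :=
  Nat.le_zero.mp (wordLength_prod_le_length (S := S) (l := []) (by simp))

theorem exists_word_length_eq_wordLength (hS : Subgroup.closure S = ⊤) (g : G) :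
    ∃ l : List G, (∀ x ∈ l, x ∈ S ∪ S⁻¹) ∧ l.prod = g ∧ l.length = wordLength S g := by
  have hne : {n : ℕ | ∃ f : Fin n → G,
      (∀ i, f i ∈ S ∨ (f i)⁻¹ ∈ S) ∧ (List.ofFn f).prod = g}.Nonempty := by
    have hg : g ∈ (Subgroup.closure S).toSubmonoid := by simp [hS]
    rw [Subgroup.closure_toSubmonoid] at hg
    obtain ⟨l, hl, rfl⟩ := Submonoid.exists_list_of_mem_closure hg
    exact ⟨l.length, l.get, fun i => hl _ (l.get_mem i), by rw [List.ofFn_get]⟩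
  obtain ⟨f, hf, hprod⟩ := Nat.sInf_mem hne
  refine ⟨List.ofFn f, fun x hx => ?_, hprod, by simp [wordLength]⟩
  obtain ⟨i, rfl⟩ := List.mem_ofFn.mp hx
  exact hf i

theorem wordLength_mul_le (hS : Subgroup.closure S = ⊤) (g h : G) :
    wordLength S (g * h) ≤ wordLength S g + wordLength S h := by
  obtain ⟨lg, hlg, rfl, hg⟩ := exists_word_length_eq_wordLength hS g
  obtain ⟨lh, hlh, rfl, hh⟩ := exists_word_length_eq_wordLength hS h
  have := wordLength_prod_le_length (l := lg ++ lh) fun x hx =>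
    (List.mem_append.mp hx).elim (hlg x) (hlh x)
  rwa [List.prod_append, List.length_append, hg, hh] at this

theorem wordLength_inv_le (hS : Subgroup.closure S = ⊤) (g : G) :
    wordLength S g⁻¹ ≤ wordLength S g := by
  obtain ⟨l, hl, rfl, hg⟩ := exists_word_length_eq_wordLength hS g
  have := wordLength_prod_le_length (S := S) (l := (l.map (·⁻¹)).reverse) fun x hx => by
    obtain ⟨y, hy, rfl⟩ := List.mem_map.mp (List.mem_reverse.mp hx)
    simpa [or_comm] using hl y hy
  rwa [← List.prod_inv_reverse, List.length_reverse, List.length_map, hg] at this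

theorem wordLength_inv (hS : Subgroup.closure S = ⊤) (g : G) :
    wordLength S g⁻¹ = wordLength S g :=
  (wordLength_inv_le hS g).antisymm (by simpa using wordLength_inv_le hS g⁻¹)

theorem wordDist_comm (hS : Subgroup.closure S = ⊤) (g h : G) :
    wordDist S g h = wordDist S h g := by
  rw [wordDist, wordDist, ← wordLength_inv hS, mul_inv_rev, inv_inv]

theorem wordLength_list_prod_le (hS : Subgroup.closure S = ⊤) {C : ℕ} {l : List G}
    (hl : ∀ x ∈ l, wordLength S x ≤ C) : wordLength S l.prod ≤ C * l.length := by
  induction l with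
  | nil => simp
  | cons x t ih =>
    have hx := hl x List.mem_cons_self
    have ht := ih fun y hy => hl y (List.mem_cons_of_mem _ hy)
    calc wordLength S (x :: t).prod ≤ wordLength S x + wordLength S t.prod :=
          wordLength_mul_le hS x t.prod
      _ ≤ C * (x :: t).length := by rw [List.length_cons]; linarith

theorem finite_setOf_wordLength_le (hSfin : S.Finite) (hS : Subgroup.closure S = ⊤) (N : ℕ) :
    {g : G | wordLength S g ≤ N}.Finite := by
  have hwords : ∀ n, {g : G | ∃ l : List G, (∀ x ∈ l, x ∈ S ∪ S⁻¹) ∧ l.prod = g ∧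
      l.length ≤ n}.Finite := by
    intro n
    induction n with
    | zero =>
      refine (Set.finite_singleton 1).subset fun g ⟨l, _, hg, hl⟩ => ?_
      rw [← hg, List.length_eq_zero_iff.mp (Nat.le_zero.mp hl), List.prod_nil]
      rfl
    | succ n ih =>
      refine ((Set.finite_singleton 1).union ((hSfin.union hSfin.inv).mul ih)).subset ?_
      rintro g ⟨_ | ⟨x, t⟩, hl, rfl, hlen⟩
      · exact Or.inl rfl
      · exact Or.inr (Set.mul_mem_mul (hl x List.mem_cons_self)
          ⟨t, fun y hy => hl y (List.mem_cons_of_mem _ hy), rfl, by simpa using hlen⟩)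
  refine (hwords N).subset fun g hg => ?_
  obtain ⟨l, hl, hprod, hlen⟩ := exists_word_length_eq_wordLength hS g
  exact ⟨l, hl, hprod, hlen ▸ hg⟩

theorem exists_le_wordLength_of_infinite (hSfin : S.Finite) (hS : Subgroup.closure S = ⊤)
    {T : Set G} (hT : T.Infinite) (N : ℕ) : ∃ g ∈ T, N ≤ wordLength S g := by
  obtain ⟨g, hgT, hgN⟩ := (hT.sdiff (finite_setOf_wordLength_le hSfin hS N)).nonempty
  exact ⟨g, hgT, by simp only [Set.mem_ofPred_eq] at hgN; omega⟩

theorem wordLength_map_le_mul {T : Set G'} (hS : Subgroup.closure S = ⊤)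
    (hT : Subgroup.closure T = ⊤) (φ : G →* G') {C : ℕ} (hC : ∀ s ∈ S, wordLength T (φ s) ≤ C)
    (g : G) : wordLength T (φ g) ≤ C * wordLength S g := by
  obtain ⟨l, hl, rfl, hlen⟩ := exists_word_length_eq_wordLength hS g
  rw [← List.prod_hom, ← hlen, ← List.length_map φ]
  refine wordLength_list_prod_le hT fun x hx => ?_
  obtain ⟨y, hy, rfl⟩ := List.mem_map.mp hx
  rcases hl y hy with hy | hy
  · exact hC y hy
  · simpa [wordLength_inv hT] using hC _ hy

theorem closure_image_eq_top (hS : Subgroup.closure S = ⊤) {φ : G →* G'}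
    (hφ : Function.Surjective φ) : Subgroup.closure (φ '' S) = ⊤ := by
  rw [← MonoidHom.map_closure, hS, Subgroup.map_top_of_surjective φ hφ]

theorem wordLength_map_le (hS : Subgroup.closure S = ⊤) {φ : G →* G'}
    (hφ : Function.Surjective φ) (g : G) : wordLength (φ '' S) (φ g) ≤ wordLength S g := by
  simpa using wordLength_map_le_mul hS (closure_image_eq_top hS hφ) φ
    (fun s hs => wordLength_le_one_of_mem (Set.mem_image_of_mem φ hs)) g

theorem wordLength_map_mulEquiv (hS : Subgroup.closure S = ⊤) (e : G ≃* G') (g : G) :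
    wordLength (e '' S) (e g) = wordLength S g := by
  refine (wordLength_map_le (φ := e.toMonoidHom) hS e.surjective g).antisymm ?_
  have hS' := closure_image_eq_top (φ := e.toMonoidHom) hS e.surjective
  have := wordLength_map_le_mul hS' hS e.symm.toMonoidHom
    (fun s ⟨t, ht, hts⟩ => by simpa [← hts] using wordLength_le_one_of_mem ht) (e g)
  rwa [one_mul, MulEquiv.coe_toMonoidHom, MulEquiv.symm_apply_apply] at this

end WordLength

section GeodesicPath

variable {G : Type*} [Group G] {S : Set G}

/-- Since `α` stays at `g` after reaching it, piecewise paths such as `i ↦ (α i, β (i - m))`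
can be written with truncated subtraction and no case split. -/
structure IsGeodesicPath (S : Set G) (g : G) (α : ℕ → G) : Prop where
  apply_zero : α 0 = 1
  apply_of_le {u : ℕ} : wordLength S g ≤ u → α u = g
  wordLength_inv_mul {u v : ℕ} : u ≤ v →
    wordLength S ((α u)⁻¹ * α v) = min v (wordLength S g) - min u (wordLength S g)

theorem exists_isGeodesicPath (hS : Subgroup.closure S = ⊤) (g : G) :
    ∃ α : ℕ → G, IsGeodesicPath S g α := by
  obtain ⟨l, hl, hprod, hlen⟩ := exists_word_length_eq_wordLength hS g
  have hinfix {u v : ℕ} (huv : u ≤ v) :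
      ((l.take u).prod)⁻¹ * (l.take v).prod = ((l.take v).drop u).prod := by
    conv_lhs => rw [← List.take_append_drop u (l.take v), List.take_take, min_eq_left huv]
    rw [List.prod_append, inv_mul_cancel_left]
  have hupper {u v : ℕ} (huv : u ≤ v) :
      wordLength S (((l.take u).prod)⁻¹ * (l.take v).prod) ≤ min v l.length - u := by
    rw [hinfix huv]
    simpa using wordLength_prod_le_length fun x hx =>
      hl x (List.mem_of_mem_take (List.mem_of_mem_drop hx))
  have hend {u : ℕ} (hu : l.length ≤ u) : (l.take u).prod = g := by
    rw [List.take_of_length_le hu, hprod]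
  refine ⟨fun u => (l.take u).prod, by simp, fun hu => hend (hlen ▸ hu), fun {u v} huv => ?_⟩
  refine le_antisymm (by have := hupper huv; omega) ?_
  -- The three pieces multiply to `g`, and the two outer ones are short.
  have htriangle : wordLength S g ≤ wordLength S (l.take u).prod +
      wordLength S (((l.take u).prod)⁻¹ * (l.take v).prod) +
      wordLength S (((l.take v).prod)⁻¹ * (l.take l.length).prod) := by
    calc wordLength S g = wordLength S ((l.take u).prod *
          (((l.take u).prod)⁻¹ * (l.take v).prod) *
          (((l.take v).prod)⁻¹ * (l.take l.length).prod)) := by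
          rw [hend le_rfl]; group
      _ ≤ _ := (wordLength_mul_le hS _ _).trans (by gcongr; exact wordLength_mul_le hS _ _)
  have h0u := hupper (Nat.zero_le u)
  simp only [List.take_zero, List.prod_nil, inv_one, one_mul] at h0u
  have hvm : wordLength S (((l.take v).prod)⁻¹ * (l.take l.length).prod) ≤ l.length - v := by
    rcases le_total v l.length with hv | hv
    · simpa using hupper hv
    · simp [hend hv, hprod, wordLength_one]
  omega

variable {α β : ℕ → G} {g g' : G}

theorem IsGeodesicPath.wordLength_concat_le (hS : Subgroup.closure S = ⊤)
    (hα : IsGeodesicPath S g α) (hβ : IsGeodesicPath S g' β) {s i j : ℕ}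
    (hs : wordLength S g ≤ s) (hij : i ≤ j) :
    wordLength S ((α i * β (i - s))⁻¹ * (α j * β (j - s))) ≤
      (min j (wordLength S g) - min i (wordLength S g)) +
        (min (j - s) (wordLength S g') - min (i - s) (wordLength S g')) := by
  rcases le_total i s with his | hsi
  · have hi : i - s = 0 := Nat.sub_eq_zero_of_le his
    calc wordLength S ((α i * β (i - s))⁻¹ * (α j * β (j - s)))
        = wordLength S ((α i)⁻¹ * α j * ((β 0)⁻¹ * β (j - s))) := by
          rw [hi, hβ.apply_zero]; group
      _ ≤ wordLength S ((α i)⁻¹ * α j) + wordLength S ((β 0)⁻¹ * β (j - s)) :=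
          wordLength_mul_le hS _ _
      _ = _ := by rw [hα.wordLength_inv_mul hij, hβ.wordLength_inv_mul (Nat.zero_le _), hi]
  · have hg : (α i * β (i - s))⁻¹ * (α j * β (j - s)) = (β (i - s))⁻¹ * β (j - s) := by
      rw [hα.apply_of_le (hs.trans hsi), hα.apply_of_le (hs.trans (hsi.trans hij))]; group
    rw [hg, hβ.wordLength_inv_mul (Nat.sub_le_sub_right hij s)]
    omega

theorem IsGeodesicPath.wordLength_concat_of_le_or_le (hα : IsGeodesicPath S g α)
    (hβ : IsGeodesicPath S g' β) {s i j : ℕ} (hij : i ≤ j) (h : j ≤ s ∨ wordLength S g ≤ i) :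
    wordLength S ((α i * β (i - s))⁻¹ * (α j * β (j - s))) =
      (min j (wordLength S g) - min i (wordLength S g)) +
        (min (j - s) (wordLength S g') - min (i - s) (wordLength S g')) := by
  rcases h with hjs | hgi
  · rw [Nat.sub_eq_zero_of_le hjs, Nat.sub_eq_zero_of_le (hij.trans hjs), hβ.apply_zero,
      mul_one, mul_one, hα.wordLength_inv_mul hij]
    simp
  · have hg : (α i * β (i - s))⁻¹ * (α j * β (j - s)) = (β (i - s))⁻¹ * β (j - s) := by
      rw [hα.apply_of_le hgi, hα.apply_of_le (hgi.trans hij)]; group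
    rw [hg, hβ.wordLength_inv_mul (Nat.sub_le_sub_right hij s)]
    omega

end GeodesicPath

section Morse

variable {G G' : Type*} [Group G] [Group G'] {S : Set G} {H : Subgroup G}

theorem IsMorse.exists_wordLength_le (hS : Subgroup.closure S = ⊤) (hH : IsMorse S H)
    (K : ℕ) : ∃ M : ℕ, ∀ (n : ℕ) (γ : ℕ → G), γ 0 ∈ H → γ n ∈ H →
      (∀ i j, i ≤ j → j ≤ n → wordLength S ((γ i)⁻¹ * γ j) ≤ K * (j - i) ∧
        j - i ≤ K * wordLength S ((γ i)⁻¹ * γ j)) →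
      ∀ i ≤ n, ∃ h ∈ H, wordLength S ((γ i)⁻¹ * h) ≤ M := by
  obtain ⟨M, hM⟩ := hH (K + 1) 0 (by simp) le_rfl
  refine ⟨⌈M⌉₊, fun n γ h0 hn hγ i hi => ?_⟩
  have hmono (i j : Fin (n + 1)) (hij : (i : ℕ) ≤ j) :
      1 / (K + 1 : ℝ) * |(i : ℝ) - j| - 0 ≤ wordDist S (γ i) (γ j) ∧
        wordDist S (γ i) (γ j) ≤ (K + 1) * |(i : ℝ) - j| + 0 := by
    obtain ⟨hup, hlow⟩ := hγ i j hij (Nat.lt_succ_iff.mp j.isLt)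
    have hdist : |(i : ℝ) - j| = ((j - i : ℕ) : ℝ) := by
      rw [abs_sub_comm, Nat.cast_sub hij, abs_of_nonneg (sub_nonneg.mpr (by exact_mod_cast hij))]
    rw [hdist, wordDist, sub_zero, add_zero, one_div_mul_eq_div, div_le_iff₀ (by positivity)]
    constructor
    · calc ((j - i : ℕ) : ℝ) ≤ K * wordLength S ((γ i)⁻¹ * γ j) := by exact_mod_cast hlow
        _ ≤ _ := by rw [mul_comm]; gcongr; linarith
    · calc (wordLength S ((γ i)⁻¹ * γ j) : ℝ) ≤ K * (j - i : ℕ) := by exact_mod_cast hup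
        _ ≤ _ := by gcongr; linarith
  have hqg : IsQuasiGeodesic S (K + 1) 0 fun j : Fin (n + 1) => γ j := by
    intro i j
    rcases le_total (i : ℕ) j with hij | hji
    · exact hmono i j hij
    · rw [wordDist_comm hS, abs_sub_comm]
      exact hmono j i hji
  obtain ⟨h, hh, hdist⟩ := hM n _ hqg (by simpa using h0) (by simpa using hn) ⟨i, by omega⟩
  have : (wordLength S ((γ i)⁻¹ * h) : ℝ) ≤ ⌈M⌉₊ := hdist.trans (Nat.le_ceil M)
  exact ⟨h, hh, by exact_mod_cast this⟩

theorem IsMorse.map_mulEquiv (hS : Subgroup.closure S = ⊤) (e : G ≃* G') (hH : IsMorse S H) :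
    IsMorse (e '' S) (H.map e.toMonoidHom) := by
  have hdist (u v : G') : wordDist (e '' S) u v = wordDist S (e.symm u) (e.symm v) := by
    rw [wordDist, wordDist, ← wordLength_map_mulEquiv hS e]
    simp
  intro k c hk hc
  obtain ⟨M, hM⟩ := hH k c hk hc
  refine ⟨M, fun n γ hγ h0 hn i => ?_⟩
  obtain ⟨h, hh, hd⟩ := hM n (e.symm ∘ γ)
    (fun i j => by simpa only [hdist, Function.comp_apply] using hγ i j)
    (Subgroup.mem_map_equiv.mp h0) (Subgroup.mem_map_equiv.mp hn) i
  exact ⟨e h, Subgroup.mem_map_equiv.mpr (by simpa using hh), by simpa [hdist] using hd⟩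

end Morse

section CoarselyContains

variable {G G' : Type*} [Group G] [Group G'] {H : Subgroup G} {T : Set G}

/-- `T` lies in a bounded neighbourhood of `H`, for every word metric on `G`. -/
def Subgroup.CoarselyContains (H : Subgroup G) (T : Set G) : Prop :=
  ∃ F : Set G, F.Finite ∧ T ⊆ (H : Set G) * F

theorem Subgroup.coarselyContains_of_wordLength_le {S : Set G} (hSfin : S.Finite)
    (hS : Subgroup.closure S = ⊤) {M : ℕ} (h : ∀ g ∈ T, ∃ x ∈ H, wordLength S (g⁻¹ * x) ≤ M) :
    H.CoarselyContains T := by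
  refine ⟨{f | wordLength S f ≤ M}⁻¹, (finite_setOf_wordLength_le hSfin hS M).inv,
    fun g hg => ?_⟩
  obtain ⟨x, hx, hd⟩ := h g hg
  exact Set.mem_mul.mpr ⟨x, hx, (g⁻¹ * x)⁻¹, by simpa using hd, by group⟩

theorem Subgroup.CoarselyContains.index_ne_zero (h : H.CoarselyContains Set.univ) :
    H.index ≠ 0 := by
  obtain ⟨F, hF, hcover⟩ := h
  have : Finite (G ⧸ H) := by
    refine Set.finite_univ_iff.mp ((hF.inv.image (QuotientGroup.mk : G → G ⧸ H)).subset ?_)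
    rintro q -
    induction q using QuotientGroup.induction_on with | H g => ?_
    obtain ⟨x, hx, f, hf, hxf⟩ := Set.mem_mul.mp (hcover (Set.mem_univ g⁻¹))
    obtain rfl := inv_eq_iff_eq_inv.mp hxf.symm
    exact ⟨f⁻¹, by simpa using hf, QuotientGroup.eq.mpr (by simpa using H.inv_mem hx)⟩
  exact Subgroup.index_ne_zero_of_finite

theorem Subgroup.CoarselyContains.infinite_image (h : H.CoarselyContains T) (φ : G →* G')
    (hT : (φ '' T).Infinite) : (φ '' H).Infinite := fun hfin => by
  obtain ⟨F, hF, hcover⟩ := h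
  refine hT ((hfin.mul (hF.image φ)).subset ?_)
  rw [← Set.image_mul]
  exact Set.image_mono hcover

theorem Subgroup.CoarselyContains.of_map_mulEquiv (e : G ≃* G')
    (h : (H.map e.toMonoidHom).CoarselyContains (e.symm ⁻¹' T)) : H.CoarselyContains T := by
  obtain ⟨F, hF, hcover⟩ := h
  refine ⟨e.symm '' F, hF.image _, fun g hg => ?_⟩
  obtain ⟨x, hx, f, hf, hxf⟩ := Set.mem_mul.mp (hcover (show e.symm (e g) ∈ T by simpa using hg))
  refine Set.mem_mul.mpr ⟨e.symm x, Subgroup.mem_map_equiv.mp hx, e.symm f, ⟨f, hf, rfl⟩, ?_⟩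
  rw [← map_mul, hxf, e.symm_apply_apply]

theorem Subgroup.CoarselyContains.univ_of_range_inl_of_range_inr {A B : Type*} [Group A]
    [Group B] {H : Subgroup (A × B)} (hA : H.CoarselyContains (Set.range (MonoidHom.inl A B)))
    (hB : H.CoarselyContains (Set.range (MonoidHom.inr A B))) : H.CoarselyContains Set.univ := by
  obtain ⟨FA, hFA, hA⟩ := hA
  obtain ⟨FB, hFB, hB⟩ := hB
  refine ⟨FB * (fun f => (f.1, (1 : B))) '' FA, hFB.mul (hFA.image _), ?_⟩
  rintro ⟨a, b⟩ -
  obtain ⟨x, hx, f, hf, hxf⟩ := Set.mem_mul.mp (hA ⟨a, rfl⟩)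
  obtain ⟨y, hy, f', hf', hyf'⟩ := Set.mem_mul.mp (hB ⟨f.2 * b, rfl⟩)
  refine Set.mem_mul.mpr
    ⟨x * y, H.mul_mem hx hy, f' * (f.1, 1), Set.mul_mem_mul hf' ⟨f, hf, rfl⟩, ?_⟩
  rw [eq_mul_inv_of_mul_eq hxf, mul_assoc, ← mul_assoc y, hyf']
  ext <;> simp

end CoarselyContains

section Product

variable {A B : Type*} [Group A] [Group B] {S : Set (A × B)} {H : Subgroup (A × B)}

theorem closure_fst_image_eq_top (hS : Subgroup.closure S = ⊤) :
    Subgroup.closure (Prod.fst '' S) = ⊤ :=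
  closure_image_eq_top hS (φ := MonoidHom.fst A B) Prod.fst_surjective

theorem closure_snd_image_eq_top (hS : Subgroup.closure S = ⊤) :
    Subgroup.closure (Prod.snd '' S) = ⊤ :=
  closure_image_eq_top hS (φ := MonoidHom.snd A B) Prod.snd_surjective

theorem wordLength_fst_le (hS : Subgroup.closure S = ⊤) (g : A × B) :
    wordLength (Prod.fst '' S) g.1 ≤ wordLength S g :=
  wordLength_map_le hS (φ := MonoidHom.fst A B) Prod.fst_surjective g

theorem wordLength_snd_le (hS : Subgroup.closure S = ⊤) (g : A × B) :
    wordLength (Prod.snd '' S) g.2 ≤ wordLength S g :=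
  wordLength_map_le hS (φ := MonoidHom.snd A B) Prod.snd_surjective g

noncomputable def l1WordLength (S : Set (A × B)) (g : A × B) : ℕ :=
  wordLength (Prod.fst '' S) g.1 + wordLength (Prod.snd '' S) g.2

theorem l1WordLength_le (hS : Subgroup.closure S = ⊤) (g : A × B) :
    l1WordLength S g ≤ 2 * wordLength S g := by
  have := wordLength_fst_le hS g
  have := wordLength_snd_le hS g
  rw [l1WordLength]
  omega

theorem exists_wordLength_le_mul_l1WordLength (hSfin : S.Finite) (hS : Subgroup.closure S = ⊤) :
    ∃ C : ℕ, ∀ g : A × B, wordLength S g ≤ C * l1WordLength S g := by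
  obtain ⟨CA, hCA⟩ := (hSfin.image fun s => wordLength S (s.1, (1 : B))).bddAbove
  obtain ⟨CB, hCB⟩ := (hSfin.image fun s => wordLength S ((1 : A), s.2)).bddAbove
  have hA := wordLength_map_le_mul (closure_fst_image_eq_top hS) hS (MonoidHom.inl A B)
    (C := CA) fun _ ⟨s, hs, hsx⟩ => hsx ▸ hCA ⟨s, hs, rfl⟩
  have hB := wordLength_map_le_mul (closure_snd_image_eq_top hS) hS (MonoidHom.inr A B)
    (C := CB) fun _ ⟨s, hs, hsy⟩ => hsy ▸ hCB ⟨s, hs, rfl⟩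
  refine ⟨CA + CB, fun g => ?_⟩
  calc wordLength S g = wordLength S (MonoidHom.inl A B g.1 * MonoidHom.inr A B g.2) := by simp
    _ ≤ CA * wordLength (Prod.fst '' S) g.1 + CB * wordLength (Prod.snd '' S) g.2 :=
        (wordLength_mul_le hS _ _).trans (add_le_add (hA g.1) (hB g.2))
    _ ≤ (CA + CB) * l1WordLength S g := by rw [l1WordLength]; nlinarith

theorem IsMorse.exists_wordLength_le_of_l1WordLength (hSfin : S.Finite)
    (hS : Subgroup.closure S = ⊤) (hH : IsMorse S H) (K : ℕ) :
    ∃ M : ℕ, ∀ (n : ℕ) (γ : ℕ → A × B), γ 0 ∈ H → γ n ∈ H →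
      (∀ i j, i ≤ j → j ≤ n → l1WordLength S ((γ i)⁻¹ * γ j) ≤ j - i ∧
        j - i ≤ K * l1WordLength S ((γ i)⁻¹ * γ j)) →
      ∀ i ≤ n, ∃ h ∈ H, wordLength S ((γ i)⁻¹ * h) ≤ M := by
  obtain ⟨C, hC⟩ := exists_wordLength_le_mul_l1WordLength hSfin hS
  obtain ⟨M, hM⟩ := hH.exists_wordLength_le hS (C + 2 * K)
  refine ⟨M, fun n γ h0 hn hγ => hM n γ h0 hn fun i j hij hjn => ?_⟩
  obtain ⟨hup, hlow⟩ := hγ i j hij hjn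
  have hl1 := l1WordLength_le hS ((γ i)⁻¹ * γ j)
  have hC' := hC ((γ i)⁻¹ * γ j)
  constructor <;> nlinarith

theorem IsMorse.exists_wordLength_fst_one_inv_mul_le (hSfin : S.Finite)
    (hS : Subgroup.closure S = ⊤) (hH : IsMorse S H) :
    ∃ M : ℕ, ∀ h ∈ H, ∃ h' ∈ H, wordLength S ((h.1, (1 : B))⁻¹ * h') ≤ M := by
  obtain ⟨M, hM⟩ := hH.exists_wordLength_le_of_l1WordLength hSfin hS 1
  refine ⟨M, fun h hh => ?_⟩
  obtain ⟨α, hα⟩ := exists_isGeodesicPath (closure_fst_image_eq_top hS) h.1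
  obtain ⟨β, hβ⟩ := exists_isGeodesicPath (closure_snd_image_eq_top hS) h.2
  set m := wordLength (Prod.fst '' S) h.1
  set r := wordLength (Prod.snd '' S) h.2
  let γ : ℕ → A × B := fun i => (α i, β (i - m))
  have hγ (i j : ℕ) (hij : i ≤ j) (hj : j ≤ m + r) : l1WordLength S ((γ i)⁻¹ * γ j) = j - i := by
    simp only [γ, l1WordLength, Prod.inv_mk, Prod.mk_mul_mk, hα.wordLength_inv_mul hij,
      hβ.wordLength_inv_mul (Nat.sub_le_sub_right hij m)]
    omega
  have hstart : γ 0 = 1 := by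
    simp only [γ, hα.apply_zero, Nat.zero_sub, hβ.apply_zero, Prod.mk_one_one]
  have hend : γ (m + r) = h := by
    simp only [γ, hα.apply_of_le (by omega : m ≤ m + r), hβ.apply_of_le (by omega : r ≤ m + r - m)]
  have hcorner : γ m = (h.1, 1) := by
    simp only [γ, hα.apply_of_le (le_refl m), Nat.sub_self, hβ.apply_zero]
  simpa only [hcorner] using hM (m + r) γ (hstart ▸ H.one_mem) (hend ▸ hh)
    (fun i j hij hj => by rw [hγ i j hij hj]; omega) m (by omega)

theorem IsMorse.exists_snd_bounded_of_infinite_fst (hSfin : S.Finite)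
    (hS : Subgroup.closure S = ⊤) (hH : IsMorse S H)
    (hfst : (Prod.fst '' (H : Set (A × B))).Infinite) :
    ∃ D : ℕ, ∀ N : ℕ, ∃ h ∈ H,
      N ≤ wordLength (Prod.fst '' S) h.1 ∧ wordLength (Prod.snd '' S) h.2 ≤ D := by
  have hSA := closure_fst_image_eq_top hS
  obtain ⟨M, hM⟩ := hH.exists_wordLength_fst_one_inv_mul_le hSfin hS
  refine ⟨M, fun N => ?_⟩
  obtain ⟨_, ⟨h, hh, rfl⟩, hN⟩ :=
    exists_le_wordLength_of_infinite (hSfin.image Prod.fst) hSA hfst (N + M)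
  obtain ⟨h', hh', hd⟩ := hM h hh
  have hclose := (wordLength_fst_le hS _).trans hd
  have hsnd := (wordLength_snd_le hS _).trans hd
  simp only [Prod.fst_mul, Prod.snd_mul, Prod.fst_inv, Prod.snd_inv, inv_one, one_mul]
    at hclose hsnd
  have htri := wordLength_mul_le hSA h'.1 (h'.1⁻¹ * h.1)
  rw [mul_inv_cancel_left, ← wordLength_inv hSA (h'.1⁻¹ * h.1), mul_inv_rev, inv_inv] at htri
  exact ⟨h', hh', by omega, hsnd⟩

theorem IsMorse.exists_wordLength_one_snd_inv_mul_le (hSfin : S.Finite)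
    (hS : Subgroup.closure S = ⊤) (hH : IsMorse S H)
    (hD : ∃ D : ℕ, ∀ N : ℕ, ∃ h ∈ H,
      N ≤ wordLength (Prod.fst '' S) h.1 ∧ wordLength (Prod.snd '' S) h.2 ≤ D) :
    ∃ M : ℕ, ∀ b : B, ∃ h ∈ H, wordLength S (((1 : A), b)⁻¹ * h) ≤ M := by
  have hSA := closure_fst_image_eq_top hS
  have hSB := closure_snd_image_eq_top hS
  obtain ⟨D, hD⟩ := hD
  obtain ⟨M, hM⟩ := hH.exists_wordLength_le_of_l1WordLength hSfin hS 2
  refine ⟨M, fun b => ?_⟩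
  set r := wordLength (Prod.snd '' S) b
  -- `|h.1| ≥ 2|b| + D` makes the `A`-segment of the detour below at least as long as its two
  -- `B`-segments together; this is the lower bound for subpaths running through all three.
  obtain ⟨h, hh, hm, hD⟩ := hD (2 * r + D)
  obtain ⟨β, hβ⟩ := exists_isGeodesicPath hSB b
  obtain ⟨α, hα⟩ := exists_isGeodesicPath hSA h.1
  obtain ⟨δ, hδ⟩ := exists_isGeodesicPath hSB (b⁻¹ * h.2)
  set m := wordLength (Prod.fst '' S) h.1
  set t := wordLength (Prod.snd '' S) (b⁻¹ * h.2)
  have ht : t ≤ r + D := by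
    have := wordLength_mul_le hSB b⁻¹ h.2
    rw [wordLength_inv hSB] at this
    omega
  -- From `1` along `β` to `(1, b)`, then along `α` to `(h.1, b)`, then along `δ` to `h`.
  let γ : ℕ → A × B := fun i => (α (i - r), β i * δ (i - (r + m)))
  have hγ (i j : ℕ) (hij : i ≤ j) (hj : j ≤ r + m + t) :
      l1WordLength S ((γ i)⁻¹ * γ j) ≤ j - i ∧ j - i ≤ 2 * l1WordLength S ((γ i)⁻¹ * γ j) := by
    have hA := hα.wordLength_inv_mul (Nat.sub_le_sub_right hij r)
    have hB := hβ.wordLength_concat_le hSB hδ (s := r + m) (by omega) hij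
    simp only [γ, l1WordLength, Prod.inv_mk, Prod.mk_mul_mk, hA] at hB ⊢
    by_cases hspan : j ≤ r + m ∨ r ≤ i
    · rw [hβ.wordLength_concat_of_le_or_le hδ hij hspan]
      omega
    · omega
  have hstart : γ 0 = 1 := by
    simp only [γ, Nat.zero_sub, hα.apply_zero, hβ.apply_zero, hδ.apply_zero, mul_one,
      Prod.mk_one_one]
  have hend : γ (r + m + t) = h := by
    simp only [γ, hα.apply_of_le (by omega : m ≤ r + m + t - r),
      hβ.apply_of_le (by omega : r ≤ r + m + t),
      hδ.apply_of_le (by omega : t ≤ r + m + t - (r + m)),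
      mul_inv_cancel_left]
  have hdetour : γ r = (1, b) := by
    simp only [γ, Nat.sub_self, hα.apply_zero, hβ.apply_of_le (le_refl r),
      Nat.sub_eq_zero_of_le (by omega : r ≤ r + m), hδ.apply_zero, mul_one]
  simpa only [hdetour] using hM (r + m + t) γ (hstart ▸ H.one_mem) (hend ▸ hh) hγ r (by omega)

theorem IsMorse.coarselyContains_range_inr (hSfin : S.Finite) (hS : Subgroup.closure S = ⊤)
    (hH : IsMorse S H) (hfst : (Prod.fst '' (H : Set (A × B))).Infinite) :
    H.CoarselyContains (Set.range (MonoidHom.inr A B)) := by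
  obtain ⟨M, hM⟩ := hH.exists_wordLength_one_snd_inv_mul_le hSfin hS
    (hH.exists_snd_bounded_of_infinite_fst hSfin hS hfst)
  exact Subgroup.coarselyContains_of_wordLength_le hSfin hS (M := M) fun _ ⟨b, hb⟩ => hb ▸ hM b

theorem IsMorse.coarselyContains_range_inl (hSfin : S.Finite) (hS : Subgroup.closure S = ⊤)
    (hH : IsMorse S H) (hsnd : (Prod.snd '' (H : Set (A × B))).Infinite) :
    H.CoarselyContains (Set.range (MonoidHom.inl A B)) := by
  let e : A × B ≃* B × A := MulEquiv.prodComm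
  have hfst : (Prod.fst '' (H.map e.toMonoidHom : Set (B × A))).Infinite := by
    rwa [Subgroup.coe_map, ← Set.image_comp]
  refine Subgroup.CoarselyContains.of_map_mulEquiv e ?_
  convert (hH.map_mulEquiv hS e).coarselyContains_range_inr (hSfin.image e)
    (closure_image_eq_top hS (φ := e.toMonoidHom) e.surjective) hfst using 1
  ext ⟨b, a⟩
  simp [e, eq_comm]

end Product

theorem morse_subgroup_of_product_finite_or_finiteIndex_general
    {A B : Type*} [Group A] [Group B] [Infinite A] [Infinite B]
    (S : Set (A × B)) (hSfin : S.Finite) (hSgen : Subgroup.closure S = ⊤)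
    (H : Subgroup (A × B)) (hH : IsMorse S H) :
    (H : Set (A × B)).Finite ∨ H.index ≠ 0 := by
  refine or_iff_not_imp_left.mpr fun hinf => ?_
  have hfst_or_snd : (Prod.fst '' (H : Set (A × B))).Infinite ∨
      (Prod.snd '' (H : Set (A × B))).Infinite := by
    by_contra! hfin
    exact hinf ((hfin.1.prod hfin.2).subset fun g hg => ⟨⟨g, hg, rfl⟩, ⟨g, hg, rfl⟩⟩)
  have hinlA : (MonoidHom.fst A B '' Set.range (MonoidHom.inl A B)).Infinite := by
    simpa [← Set.range_comp, Function.comp_def] using Set.infinite_univ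
  have hinrB : (MonoidHom.snd A B '' Set.range (MonoidHom.inr A B)).Infinite := by
    simpa [← Set.range_comp, Function.comp_def] using Set.infinite_univ
  have hfst_and_snd : (Prod.fst '' (H : Set (A × B))).Infinite ∧
      (Prod.snd '' (H : Set (A × B))).Infinite := by
    rcases hfst_or_snd with hfst | hsnd
    · exact ⟨hfst, (hH.coarselyContains_range_inr hSfin hSgen hfst).infinite_image _ hinrB⟩
    · exact ⟨(hH.coarselyContains_range_inl hSfin hSgen hsnd).infinite_image _ hinlA, hsnd⟩
  exact ((hH.coarselyContains_range_inl hSfin hSgen hfst_and_snd.2).univ_of_range_inl_of_range_inr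
    (hH.coarselyContains_range_inr hSfin hSgen hfst_and_snd.1)).index_ne_zero

/-- A Morse subgroup of a direct product of two finitely generated
infinite groups is finite or of finite index. -/
theorem morse_subgroup_of_product_finite_or_finiteIndex
    {A B : Type*} [Group A] [Group B] [Infinite A] [Infinite B]
    (hA : Group.FG A) (hB : Group.FG B)
    (S : Set (A × B)) (hSfin : S.Finite) (hSgen : Subgroup.closure S = ⊤)
    (H : Subgroup (A × B)) (hH : IsMorse S H) :
    (H : Set (A × B)).Finite ∨ H.index ≠ 0 :=
  morse_subgroup_of_product_finite_or_finiteIndex_general S hSfin hSgen H hH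
end

section
/- Every Morse subgroup of ℤⁿ (n ≥ 2, with the standard word metric) is either trivial/finite or of finite index in ℤⁿ. -/
namespace ZnMorse

variable {n : ℕ}

abbrev Gn (n : ℕ) := Multiplicative (Fin n → ℤ)

def Szn (n : ℕ) : Set (Gn n) :=
  Set.range fun i : Fin n => Multiplicative.ofAdd (Pi.single i (1 : ℤ))

def L1 {n : ℕ} (x : Fin n → ℤ) : ℕ := ∑ i, (x i).natAbs

lemma L1_single (i : Fin n) (c : ℤ) : L1 (Pi.single i c) = c.natAbs := by
  simp [L1, Pi.single_apply, apply_ite Int.natAbs]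

lemma L1_neg (x : Fin n → ℤ) : L1 (-x) = L1 x := by
  simp [L1]

lemma L1_add_le (x y : Fin n → ℤ) : L1 (x + y) ≤ L1 x + L1 y :=
  calc L1 (x + y) ≤ ∑ i, ((x i).natAbs + (y i).natAbs) :=
        Finset.sum_le_sum fun i _ => Int.natAbs_add_le _ _
    _ = L1 x + L1 y := Finset.sum_add_distrib

lemma L1_letter {g : Gn n} (hg : g ∈ Szn n ∨ g⁻¹ ∈ Szn n) : L1 g.toAdd = 1 := by
  rcases hg with ⟨i, hi⟩ | ⟨i, hi⟩
  · rw [← hi, toAdd_ofAdd, L1_single]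
    rfl
  · have hi' : Multiplicative.ofAdd (Pi.single i (1:ℤ)) = g⁻¹ := hi
    have hg : g = (Multiplicative.ofAdd (Pi.single i (1:ℤ)))⁻¹ := by
      rw [hi', inv_inv]
    rw [hg, ← ofAdd_neg, toAdd_ofAdd, L1_neg, L1_single]
    rfl

lemma L1_list_prod_le (l : List (Gn n)) (hl : ∀ g ∈ l, g ∈ Szn n ∨ g⁻¹ ∈ Szn n) :
    L1 (Multiplicative.toAdd l.prod) ≤ l.length := by
  induction l with
  | nil => simp [L1]
  | cons a l ih =>
    have h1 : Multiplicative.toAdd (a * l.prod) = Multiplicative.toAdd a + Multiplicative.toAdd l.prod := rfl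
    rw [List.prod_cons, h1]
    calc L1 (Multiplicative.toAdd a + Multiplicative.toAdd l.prod)
        ≤ L1 (Multiplicative.toAdd a) + L1 (Multiplicative.toAdd l.prod) := L1_add_le _ _
      _ ≤ 1 + l.length := by
          have := L1_letter (hl a (List.mem_cons_self))
          have := ih (fun g hg => hl g (List.mem_cons_of_mem a hg))
          omega
      _ = (a :: l).length := by simp [add_comm]

lemma exists_word : ∀ (N : ℕ) (x : Fin n → ℤ), L1 x = N →
    ∃ l : List (Gn n), l.length = N ∧ (∀ g ∈ l, g ∈ Szn n ∨ g⁻¹ ∈ Szn n) ∧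
      l.prod = Multiplicative.ofAdd x := by
  intro N
  induction N with
  | zero =>
    intro x hx
    have : x = 0 := by
      funext i
      have h := Finset.sum_eq_zero_iff.1 hx i (Finset.mem_univ i)
      show x i = 0
      omega
    exact ⟨[], rfl, by simp, by simp [this]⟩
  | succ N ih =>
    intro x hx
    have hne : ∃ i, x i ≠ 0 := by
      by_contra h
      push_neg at h
      have : L1 x = 0 := Finset.sum_eq_zero fun i _ => by rw [h i]; rfl
      omega
    obtain ⟨i, hi⟩ := hne
    set σ : ℤ := if 0 < x i then 1 else -1 with hσ
    set x' : Fin n → ℤ := x - Pi.single i σ with hx'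
    have hother : ∀ t, t ≠ i → x' t = x t := by
      intro t ht
      simp [hx', Pi.single_apply, ht]
    have hati : (x' i).natAbs + 1 = (x i).natAbs := by
      have : x' i = x i - σ := by simp [hx']
      rw [this, hσ]
      split_ifs <;> omega
    have hL1' : L1 x' = N := by
      have e1 : ∑ t ∈ Finset.univ.erase i, (x' t).natAbs + (x' i).natAbs = L1 x' :=
        Finset.sum_erase_add _ _ (Finset.mem_univ i)
      have e2 : ∑ t ∈ Finset.univ.erase i, (x t).natAbs + (x i).natAbs = L1 x :=
        Finset.sum_erase_add _ _ (Finset.mem_univ i)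
      have e3 : ∑ t ∈ Finset.univ.erase i, (x' t).natAbs
          = ∑ t ∈ Finset.univ.erase i, (x t).natAbs :=
        Finset.sum_congr rfl fun t ht => by rw [hother t (Finset.ne_of_mem_erase ht)]
      omega
    obtain ⟨l, hlen, hlet, hprod⟩ := ih x' hL1'
    refine ⟨Multiplicative.ofAdd (Pi.single i σ) :: l, by simp [hlen], ?_, ?_⟩
    · intro g hg
      rcases List.mem_cons.1 hg with rfl | hg
      · rw [hσ]
        split_ifs
        · exact Or.inl ⟨i, rfl⟩
        · refine Or.inr ⟨i, ?_⟩
          have : (Pi.single i (1:ℤ) : Fin n → ℤ) = -(Pi.single i (-1:ℤ) : Fin n → ℤ) := by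
            rw [← Pi.single_neg, neg_neg]
          show Multiplicative.ofAdd (Pi.single i (1:ℤ) : Fin n → ℤ)
              = (Multiplicative.ofAdd (Pi.single i (-1:ℤ) : Fin n → ℤ))⁻¹
          rw [this, ofAdd_neg]
      · exact hlet g hg
    · rw [List.prod_cons, hprod, ← ofAdd_add]
      congr 1
      simp [hx']

lemma wordLength_eq_L1 (g : Gn n) : wordLength (Szn n) g = L1 (Multiplicative.toAdd g) := by
  apply le_antisymm
  · obtain ⟨l, hlen, hlet, hprod⟩ := exists_word (L1 (Multiplicative.toAdd g)) (Multiplicative.toAdd g) rfl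
    have hmem : l.length ∈ {m : ℕ | ∃ f : Fin m → Gn n,
        (∀ i, f i ∈ Szn n ∨ (f i)⁻¹ ∈ Szn n) ∧ (List.ofFn f).prod = g} := by
      refine ⟨l.get, fun i => hlet _ (l.get_mem i), ?_⟩
      rw [List.ofFn_get, hprod]
      simp
    rw [wordLength, ← hlen]
    exact Nat.sInf_le hmem
  · apply le_csInf
    · obtain ⟨l, hlen, hlet, hprod⟩ := exists_word (L1 (Multiplicative.toAdd g)) (Multiplicative.toAdd g) rfl
      refine ⟨l.length, l.get, fun i => hlet _ (l.get_mem i), ?_⟩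
      rw [List.ofFn_get, hprod]; simp
    · rintro m ⟨f, hlet, hprod⟩
      have := L1_list_prod_le (List.ofFn f) (fun g hg => by
        obtain ⟨i, rfl⟩ := List.mem_ofFn.1 hg
        exact hlet i)
      rw [hprod, List.length_ofFn] at this
      exact this

lemma wordDist_eq_L1 (g h : Gn n) :
    wordDist (Szn n) g h = (L1 (Multiplicative.toAdd h - Multiplicative.toAdd g) : ℝ) := by
  rw [wordDist, wordLength_eq_L1]
  congr 2
  show -Multiplicative.toAdd g + Multiplicative.toAdd h = _
  ring



/-- Cast homomorphism. -/
def castHom (n : ℕ) : (Fin n → ℤ) →+ (Fin n → ℚ) where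
  toFun x i := (x i : ℚ)
  map_zero' := by funext i; simp
  map_add' x y := by funext i; push_cast; simp

@[simp] lemma castHom_apply (x : Fin n → ℤ) (i : Fin n) : castHom n x i = (x i : ℚ) := rfl

lemma castHom_injective : Function.Injective (castHom n) := by
  intro x y h
  funext i
  have h2 : ((x i : ℚ)) = (y i : ℚ) := congrFun h i
  exact_mod_cast h2

lemma castHom_single (i : Fin n) (c : ℤ) :
    castHom n (Pi.single i c) = Pi.single i (c : ℚ) := by
  funext t
  simp [castHom_apply, Pi.single_apply, apply_ite (fun z : ℤ => (z : ℚ))]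

lemma int_of_den_dvd {q : ℚ} {d : ℤ} (hd : ((q.den : ℤ)) ∣ d) :
    ((q.num * (d / (q.den : ℤ)) : ℤ) : ℚ) = (d : ℚ) * q := by
  obtain ⟨e, he⟩ := hd
  have hden : ((q.den : ℤ)) ≠ 0 := by exact_mod_cast q.den_nz
  have hdenQ : ((q.den : ℚ)) ≠ 0 := by exact_mod_cast q.den_nz
  have h2 : ((q.den : ℚ)) * q = ((q.num : ℚ)) := by
    rw [mul_comm]
    exact_mod_cast Rat.mul_den_eq_num q
  rw [he, Int.mul_ediv_cancel_left _ hden]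
  push_cast
  linear_combination (-(e : ℚ)) * h2

lemma ann_or_single (Hadd : AddSubgroup (Fin n → ℤ)) :
    (∃ z : Fin n → ℤ, z ≠ 0 ∧ ∀ x ∈ Hadd, ∑ i, z i * x i = 0) ∨
    (∃ d : ℤ, 0 < d ∧ ∀ i, (Pi.single i d : Fin n → ℤ) ∈ Hadd) := by
  classical
  set W : Submodule ℚ (Fin n → ℚ) :=
    Submodule.span ℚ ((castHom n) '' (Hadd : Set (Fin n → ℤ))) with hWdef
  by_cases htop : W = ⊤
  · right
    have key : ∀ i : Fin n, ∃ D : ℤ, 0 < D ∧ (Pi.single i D : Fin n → ℤ) ∈ Hadd := by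
      intro i
      have hmem : (Pi.single i (1:ℚ) : Fin n → ℚ) ∈ W := htop ▸ Submodule.mem_top
      rw [hWdef, Submodule.mem_span_set'] at hmem
      obtain ⟨k, coef, vecs, hsum⟩ := hmem
      choose y hyH hyc using fun t : Fin k => (vecs t).2
      set D : ℤ := ∏ t, ((coef t).den : ℤ) with hD
      have hDpos : 0 < D := Finset.prod_pos fun t _ => by exact_mod_cast (coef t).pos
      have hdvd : ∀ t : Fin k, ((coef t).den : ℤ) ∣ D := fun t =>
        Finset.dvd_prod_of_mem _ (Finset.mem_univ t)
      set m : Fin k → ℤ := fun t => (coef t).num * (D / ((coef t).den : ℤ)) with hm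
      have hmQ : ∀ t, ((m t : ℤ) : ℚ) = (D : ℚ) * coef t := fun t => int_of_den_dvd (hdvd t)
      refine ⟨D, hDpos, ?_⟩
      have hyHsum : (∑ t, m t • y t) ∈ Hadd :=
        AddSubgroup.sum_mem _ (fun t _ => AddSubgroup.zsmul_mem _ (hyH t) _)
      have hc : castHom n (∑ t, m t • y t) = castHom n (Pi.single i D) := by
        rw [map_sum, castHom_single]
        have e1 : ∀ t, castHom n (m t • y t) = ((m t : ℤ) : ℚ) • (vecs t : Fin n → ℚ) := by
          intro t
          rw [map_zsmul, hyc t, Int.cast_smul_eq_zsmul]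
        rw [Finset.sum_congr rfl (fun t _ => e1 t)]
        have e2 : ∑ t, ((m t : ℤ) : ℚ) • (vecs t : Fin n → ℚ)
            = (D : ℚ) • ∑ t, coef t • (vecs t : Fin n → ℚ) := by
          rw [Finset.smul_sum]
          refine Finset.sum_congr rfl (fun t _ => ?_)
          rw [hmQ t, mul_smul]
        rw [e2, hsum, ← Pi.single_smul, smul_eq_mul, mul_one]
      have := castHom_injective hc
      rwa [← this]
    choose D hDpos hDmem using key
    refine ⟨∏ i, D i, Finset.prod_pos (fun i _ => hDpos i), fun i => ?_⟩
    have e1 : (∏ j, D j) = (∏ j ∈ Finset.univ.erase i, D j) * D i :=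
      (Finset.prod_erase_mul _ _ (Finset.mem_univ i)).symm
    have e2 : (Pi.single i ((∏ j ∈ Finset.univ.erase i, D j) * D i) : Fin n → ℤ)
        = (∏ j ∈ Finset.univ.erase i, D j) • (Pi.single i (D i) : Fin n → ℤ) := by
      rw [← Pi.single_smul, smul_eq_mul]
    rw [e1, e2]
    exact AddSubgroup.zsmul_mem _ (hDmem i) _
  · left
    have hlt : W < ⊤ := lt_top_iff_ne_top.2 htop
    obtain ⟨f, hf0, hfmap⟩ := Submodule.exists_dual_map_eq_bot_of_lt_top hlt inferInstance
    have hker : ∀ w ∈ W, f w = 0 := by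
      intro w hw
      have : f w ∈ Submodule.map f W := ⟨w, hw, rfl⟩
      rw [hfmap] at this
      exact (Submodule.mem_bot ℚ).1 this
    set q : Fin n → ℚ := fun i => f (Pi.single i (1:ℚ) : Fin n → ℚ) with hq
    have hrepr : ∀ v : Fin n → ℚ, f v = ∑ i, v i * q i := by
      intro v
      rw [LinearMap.pi_apply_eq_sum_univ f v]
      refine Finset.sum_congr rfl fun i _ => ?_
      rw [smul_eq_mul, show (fun j => if i = j then (1:ℚ) else 0)
          = (Pi.single i (1:ℚ) : Fin n → ℚ) from funext fun u => by
        rw [Pi.single_apply]; by_cases h : i = u <;> simp [h, eq_comm]]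
    set d : ℤ := ∏ i, ((q i).den : ℤ) with hd
    have hdpos : 0 < d := Finset.prod_pos fun t _ => by exact_mod_cast (q t).pos
    have hdvd : ∀ i : Fin n, ((q i).den : ℤ) ∣ d := fun i =>
      Finset.dvd_prod_of_mem _ (Finset.mem_univ i)
    set z : Fin n → ℤ := fun i => (q i).num * (d / ((q i).den : ℤ)) with hz
    have hzQ : ∀ i, ((z i : ℤ) : ℚ) = (d : ℚ) * q i := fun i => int_of_den_dvd (hdvd i)
    have hdQ : ((d:ℤ):ℚ) ≠ 0 := by
      exact_mod_cast hdpos.ne'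
    refine ⟨z, ?_, ?_⟩
    · intro hzz
      apply hf0
      have hq0 : ∀ i, q i = 0 := by
        intro i
        have : ((z i : ℤ) : ℚ) = 0 := by rw [congrFun hzz i]; simp
        rw [hzQ i] at this
        exact (mul_eq_zero.1 this).resolve_left hdQ
      apply LinearMap.ext
      intro v
      rw [hrepr]
      simp [hq0]
    · intro x hx
      have h1 : f (castHom n x) = 0 :=
        hker _ (Submodule.subset_span ⟨x, hx, rfl⟩)
      have h2 : ((∑ i, z i * x i : ℤ) : ℚ) = (d : ℚ) * f (castHom n x) := by
        rw [hrepr]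
        push_cast
        rw [Finset.mul_sum]
        refine Finset.sum_congr rfl fun i _ => ?_
        rw [hzQ i, castHom_apply]
        ring
      rw [h1, mul_zero] at h2
      exact_mod_cast h2

/-- preimage additive subgroup -/
def preAdd (H : Subgroup (Gn n)) : AddSubgroup (Fin n → ℤ) where
  carrier := Multiplicative.ofAdd ⁻¹' (H : Set (Gn n))
  zero_mem' := H.one_mem
  add_mem' hx hy := H.mul_mem hx hy
  neg_mem' hx := H.inv_mem hx

lemma mem_preAdd {H : Subgroup (Gn n)} {x : Fin n → ℤ} :
    x ∈ preAdd H ↔ Multiplicative.ofAdd x ∈ H := Iff.rfl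

lemma index_ne_zero (H : Subgroup (Gn n)) (d : ℤ) (hd : 0 < d)
    (hdH : ∀ i, (Pi.single i d : Fin n → ℤ) ∈ preAdd H) : H.index ≠ 0 := by
  have hstep : ∀ x : Fin n → ℤ,
      (Multiplicative.ofAdd fun i => (((x i % d).toNat : ℕ) : ℤ))⁻¹ * Multiplicative.ofAdd x ∈ H := by
    intro x
    have h1 : (Multiplicative.ofAdd fun i => (((x i % d).toNat : ℕ) : ℤ))⁻¹ * Multiplicative.ofAdd x
        = Multiplicative.ofAdd (x - fun i => (((x i % d).toNat : ℕ) : ℤ)) := by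
      rw [← ofAdd_neg, ← ofAdd_add]
      congr 1
      abel
    rw [h1]
    have h2 : (x - fun i => (((x i % d).toNat : ℕ) : ℤ))
        = ∑ i, (x i / d) • (Pi.single i d : Fin n → ℤ) := by
      have e1 : ∑ i, (x i / d) • (Pi.single i d : Fin n → ℤ)
          = ∑ i, (Pi.single i ((x i / d) * d) : Fin n → ℤ) := by
        refine Finset.sum_congr rfl fun i _ => ?_
        rw [← Pi.single_smul, smul_eq_mul]
      rw [e1, Finset.univ_sum_single (fun i => (x i / d) * d)]
      funext i
      simp only [Pi.sub_apply]
      have h1 : 0 ≤ x i % d := Int.emod_nonneg _ (by omega)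
      linarith [Int.mul_ediv_add_emod (x i) d, mul_comm d (x i / d), Int.toNat_of_nonneg h1]
    rw [← mem_preAdd, h2]
    exact AddSubgroup.sum_mem _ (fun i _ => AddSubgroup.zsmul_mem _ (hdH i) _)
  have hfin : Finite (Gn n ⧸ H) := by
    refine Finite.of_surjective (fun v : Fin n → Fin d.toNat =>
      (QuotientGroup.mk (Multiplicative.ofAdd fun i => ((v i : ℕ) : ℤ)) : Gn n ⧸ H)) ?_
    intro qq
    obtain ⟨g, rfl⟩ := QuotientGroup.mk_surjective qq
    refine ⟨fun i => ⟨(Multiplicative.toAdd g i % d).toNat, ?_⟩, ?_⟩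
    · have h1 : 0 ≤ Multiplicative.toAdd g i % d := Int.emod_nonneg _ (by omega)
      have h2 : Multiplicative.toAdd g i % d < d := Int.emod_lt_of_pos _ hd
      omega
    · rw [QuotientGroup.eq]
      have := hstep (Multiplicative.toAdd g)
      simpa using this
  exact Subgroup.index_ne_zero_of_finite

lemma natAbs_sum_le {ι : Type*} (s : Finset ι) (f : ι → ℤ) :
    (∑ i ∈ s, f i).natAbs ≤ ∑ i ∈ s, (f i).natAbs := by
  induction s using Finset.cons_induction with
  | empty => simp
  | cons a s ha ih =>
    rw [Finset.sum_cons, Finset.sum_cons]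
    exact (Int.natAbs_add_le _ _).trans (by omega)

lemma L1_smul (c : ℤ) (x : Fin n → ℤ) : L1 (c • x) = c.natAbs * L1 x := by
  simp only [L1, Pi.smul_apply, smul_eq_mul, Int.natAbs_mul, Finset.mul_sum]

lemma dot_natAbs_le (z x : Fin n → ℤ) :
    (∑ i, z i * x i).natAbs ≤ (∑ i, (z i).natAbs) * L1 x := by
  calc (∑ i, z i * x i).natAbs ≤ ∑ i, (z i * x i).natAbs := natAbs_sum_le _ _
    _ = ∑ i, (z i).natAbs * (x i).natAbs := by simp [Int.natAbs_mul]
    _ ≤ ∑ i, (∑ t, (z t).natAbs) * (x i).natAbs := Finset.sum_le_sum fun i _ =>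
        Nat.mul_le_mul_right _ (Finset.single_le_sum (f := fun t => (z t).natAbs)
          (fun t _ => Nat.zero_le _) (Finset.mem_univ i))
    _ = (∑ t, (z t).natAbs) * L1 x := by rw [L1, ← Finset.mul_sum]

lemma coord_le_L1 (x : Fin n → ℤ) (i : Fin n) : (x i).natAbs ≤ L1 x :=
  Finset.single_le_sum (f := fun t => (x t).natAbs) (fun t _ => Nat.zero_le _) (Finset.mem_univ i)

end ZnMorse

/-- Every Morse subgroup of `ℤⁿ` (`n ≥ 2`, standard generating
set) is finite or of finite index. -/
theorem morse_subgroup_of_zn_finite_or_finiteIndex (n : ℕ) (hn : 2 ≤ n)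
    (H : Subgroup (Multiplicative (Fin n → ℤ)))
    (hH : IsMorse
      (Set.range fun i : Fin n =>
        Multiplicative.ofAdd (Pi.single i (1 : ℤ))) H) :
    (H : Set (Multiplicative (Fin n → ℤ))).Finite ∨ H.index ≠ 0 := by
  classical
  by_cases hfin : (H : Set (Multiplicative (Fin n → ℤ))).Finite
  · exact Or.inl hfin
  refine Or.inr fun hidx => ?_
  have hHS : IsMorse (ZnMorse.Szn n) H := hH
  rcases ZnMorse.ann_or_single (ZnMorse.preAdd H) with ⟨z, hz0, hzdot⟩ | ⟨d, hd0, hdH⟩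
  swap
  · exact ZnMorse.index_ne_zero H d hd0 hdH hidx
  -- a nontrivial element of H
  have hinf : (H : Set (ZnMorse.Gn n)).Infinite := hfin
  obtain ⟨g0, hg0⟩ := (hinf.diff (Set.finite_singleton 1)).nonempty
  have hg0H : g0 ∈ H := hg0.1
  have hg0ne : g0 ≠ 1 := hg0.2
  set a0 : Fin n → ℤ := Multiplicative.toAdd g0 with ha0def
  have ha0H : a0 ∈ ZnMorse.preAdd H := by
    rw [ZnMorse.mem_preAdd, ha0def, ofAdd_toAdd]
    exact hg0H
  have ha0ne : a0 ≠ 0 := by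
    intro h
    apply hg0ne
    have h2 : Multiplicative.ofAdd a0 = Multiplicative.ofAdd 0 := by rw [h]
    rw [ha0def, ofAdd_toAdd, ofAdd_zero] at h2
    exact h2
  obtain ⟨i₀, hi₀⟩ := Function.ne_iff.1 ha0ne
  obtain ⟨j, hj⟩ := Function.ne_iff.1 hz0
  simp only [Pi.zero_apply] at hi₀ hj
  set Az : ℕ := ∑ i, (z i).natAbs with hAzdef
  have hzj1 : 1 ≤ (z j).natAbs := by omega
  have hAz1 : 1 ≤ Az :=
    le_trans hzj1 (Finset.single_le_sum (f := fun i => (z i).natAbs)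
      (fun i _ => Nat.zero_le _) (Finset.mem_univ j))
  set La : ℕ := ZnMorse.L1 a0 with hLadef
  set K : ℕ := 2 * Az + La + 1 with hKdef
  have hKposR : (0:ℝ) < (K:ℝ) := by
    have : 0 < K := by omega
    exact_mod_cast this
  have hk1 : (1:ℝ) ≤ (K:ℝ) := by
    have : 1 ≤ K := by omega
    exact_mod_cast this
  obtain ⟨M, hM⟩ := hHS (K:ℝ) 0 hk1 le_rfl
  obtain ⟨m, hm⟩ := exists_nat_gt (max ((Az:ℝ) * M) 0)
  set ej : Fin n → ℤ := Pi.single j 1 with hejdef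
  have hL1ej : ZnMorse.L1 ej = 1 := by rw [hejdef, ZnMorse.L1_single]; rfl
  set γ : Fin (2*m+1) → ZnMorse.Gn n := fun i =>
    Multiplicative.ofAdd ((i.val : ℤ) • a0 + ((min i.val (2*m - i.val) : ℕ) : ℤ) • ej) with hγ
  -- the key dot-product bound
  have hdotH : ∀ x ∈ ZnMorse.preAdd H, ∑ t, z t * x t = 0 := hzdot
  have hdotej : ∑ t, z t * ej t = z j := by
    rw [hejdef]
    simp [Pi.single_apply, mul_ite, Finset.sum_ite_eq' Finset.univ j]
  -- quasigeodesic
  have hqg : IsQuasiGeodesic (ZnMorse.Szn n) (K:ℝ) 0 γ := by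
    intro i i'
    set a : ℤ := (i'.val : ℤ) - (i.val : ℤ) with ha
    set b : ℤ := ((min i'.val (2*m - i'.val) : ℕ) : ℤ)
        - ((min i.val (2*m - i.val) : ℕ) : ℤ) with hb
    set δ : Fin n → ℤ := a • a0 + b • ej with hδ
    have hdist : wordDist (ZnMorse.Szn n) (γ i) (γ i') = ((ZnMorse.L1 δ : ℕ) : ℝ) := by
      rw [ZnMorse.wordDist_eq_L1]
      congr 2
      rw [hγ]
      simp only [toAdd_ofAdd]
      rw [hδ, ha, hb, sub_smul, sub_smul]
      abel
    have hij : |((i : ℝ)) - ((i' : ℝ))| = ((a.natAbs : ℕ) : ℝ) := by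
      rw [abs_sub_comm]
      rw [show ((a.natAbs : ℕ) : ℝ) = |(a : ℝ)| by rw [Nat.cast_natAbs, Int.cast_abs]]
      rw [ha]
      push_cast
      rfl
    have hβα : b.natAbs ≤ a.natAbs := by
      have h1 : i.val < 2*m+1 := i.isLt
      have h2 : i'.val < 2*m+1 := i'.isLt
      rw [ha, hb]
      omega
    have hub : ZnMorse.L1 δ ≤ a.natAbs * La + b.natAbs := by
      calc ZnMorse.L1 δ ≤ ZnMorse.L1 (a • a0) + ZnMorse.L1 (b • ej) := ZnMorse.L1_add_le _ _
        _ = a.natAbs * La + b.natAbs * ZnMorse.L1 ej := by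
            rw [ZnMorse.L1_smul, ZnMorse.L1_smul, hLadef]
        _ = a.natAbs * La + b.natAbs := by rw [hL1ej, mul_one]
    have hdotδ : ∑ t, z t * δ t = b * z j := by
      have e1 : ∀ t, z t * δ t = a * (z t * a0 t) + b * (z t * ej t) := by
        intro t
        rw [hδ]
        simp only [Pi.add_apply, Pi.smul_apply, smul_eq_mul]
        ring
      calc ∑ t, z t * δ t = ∑ t, (a * (z t * a0 t) + b * (z t * ej t)) :=
            Finset.sum_congr rfl fun t _ => e1 t
        _ = a * ∑ t, z t * a0 t + b * ∑ t, z t * ej t := by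
            rw [Finset.sum_add_distrib, Finset.mul_sum, Finset.mul_sum]
        _ = b * z j := by rw [hdotH a0 ha0H, hdotej, mul_zero, zero_add]
    have hlow1 : b.natAbs ≤ Az * ZnMorse.L1 δ := by
      calc b.natAbs ≤ b.natAbs * (z j).natAbs := Nat.le_mul_of_pos_right _ (by omega)
        _ = (b * z j).natAbs := (Int.natAbs_mul b (z j)).symm
        _ = (∑ t, z t * δ t).natAbs := by rw [hdotδ]
        _ ≤ Az * ZnMorse.L1 δ := ZnMorse.dot_natAbs_le z δ
    have hlow2 : a.natAbs ≤ ZnMorse.L1 δ + b.natAbs := by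
      have n5 : (δ i₀).natAbs ≤ ZnMorse.L1 δ := ZnMorse.coord_le_L1 δ i₀
      have n1 : (a * a0 i₀).natAbs = a.natAbs * (a0 i₀).natAbs := Int.natAbs_mul _ _
      have n2 : (b * ej i₀).natAbs ≤ b.natAbs := by
        rw [Int.natAbs_mul]
        have : (ej i₀).natAbs ≤ 1 := by
          rw [hejdef, Pi.single_apply]
          split_ifs <;> simp
        exact le_trans (Nat.mul_le_mul_left _ this) (by omega)
      have n3 : (a * a0 i₀).natAbs ≤ (δ i₀).natAbs + (b * ej i₀).natAbs := by
        have e : a * a0 i₀ = δ i₀ - b * ej i₀ := by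
          rw [hδ]
          simp only [Pi.add_apply, Pi.smul_apply, smul_eq_mul]
          ring
        rw [e]
        exact Int.natAbs_sub_le _ _
      have n4 : 1 ≤ (a0 i₀).natAbs := by omega
      have n6 : a.natAbs ≤ a.natAbs * (a0 i₀).natAbs :=
        Nat.le_mul_of_pos_right _ (by omega)
      omega
    constructor
    · rw [hdist, sub_zero, hij, one_div, inv_mul_le_iff₀ hKposR]
      have hnat : a.natAbs ≤ K * ZnMorse.L1 δ := by
        calc a.natAbs ≤ ZnMorse.L1 δ + b.natAbs := hlow2
          _ ≤ ZnMorse.L1 δ + Az * ZnMorse.L1 δ := by omega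
          _ = (1 + Az) * ZnMorse.L1 δ := by ring
          _ ≤ K * ZnMorse.L1 δ := Nat.mul_le_mul_right _ (by omega)
      exact_mod_cast hnat
    · rw [hdist, hij, add_zero]
      have hnat : ZnMorse.L1 δ ≤ K * a.natAbs := by
        calc ZnMorse.L1 δ ≤ a.natAbs * La + b.natAbs := hub
          _ ≤ a.natAbs * La + a.natAbs := by omega
          _ = a.natAbs * (La + 1) := by ring
          _ ≤ a.natAbs * K := Nat.mul_le_mul_left _ (by omega)
          _ = K * a.natAbs := Nat.mul_comm _ _
      exact_mod_cast hnat
  -- endpoints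
  have h0 : γ 0 ∈ H := by
    have e : γ 0 = Multiplicative.ofAdd (0 : Fin n → ℤ) := by
      rw [hγ]
      simp
    rw [e, ofAdd_zero]
    exact H.one_mem
  have hlast : γ (Fin.last (2*m)) ∈ H := by
    have e : γ (Fin.last (2*m)) = Multiplicative.ofAdd (((2*m : ℕ) : ℤ) • a0) := by
      rw [hγ]
      simp [Fin.val_last]
    rw [e, ← ZnMorse.mem_preAdd]
    exact AddSubgroup.zsmul_mem _ ha0H _
  -- midpoint far from H
  obtain ⟨p, hpH, hpd⟩ := hM (2*m) γ hqg h0 hlast ⟨m, by omega⟩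
  have hmid : γ ⟨m, by omega⟩ = Multiplicative.ofAdd (((m:ℕ):ℤ) • a0 + ((m:ℕ):ℤ) • ej) := by
    rw [hγ]
    simp only
    rw [show min m (2*m - m) = m by omega]
  rw [hmid, ZnMorse.wordDist_eq_L1, toAdd_ofAdd] at hpd
  set δ' : Fin n → ℤ := Multiplicative.toAdd p - (((m:ℕ):ℤ) • a0 + ((m:ℕ):ℤ) • ej) with hδ'
  have hpadd : Multiplicative.toAdd p ∈ ZnMorse.preAdd H := by
    rw [ZnMorse.mem_preAdd, ofAdd_toAdd]
    exact hpH
  have hdotδ' : ∑ t, z t * δ' t = -(((m:ℕ):ℤ) * z j) := by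
    have e1 : ∀ t, z t * δ' t
        = z t * Multiplicative.toAdd p t - ((m:ℕ):ℤ) * (z t * a0 t) - ((m:ℕ):ℤ) * (z t * ej t) := by
      intro t
      rw [hδ']
      simp only [Pi.sub_apply, Pi.add_apply, Pi.smul_apply, smul_eq_mul]
      ring
    calc ∑ t, z t * δ' t
        = ∑ t, (z t * Multiplicative.toAdd p t - ((m:ℕ):ℤ) * (z t * a0 t)
            - ((m:ℕ):ℤ) * (z t * ej t)) := Finset.sum_congr rfl fun t _ => e1 t
      _ = (∑ t, z t * Multiplicative.toAdd p t) - ((m:ℕ):ℤ) * (∑ t, z t * a0 t)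
            - ((m:ℕ):ℤ) * (∑ t, z t * ej t) := by
          rw [Finset.sum_sub_distrib, Finset.sum_sub_distrib, Finset.mul_sum, Finset.mul_sum]
      _ = -(((m:ℕ):ℤ) * z j) := by
          rw [hdotH _ hpadd, hdotH a0 ha0H, hdotej, mul_zero, sub_zero, zero_sub]
  have hmlow : m ≤ Az * ZnMorse.L1 δ' := by
    calc m = (((m:ℕ):ℤ)).natAbs := by simp
      _ ≤ (((m:ℕ):ℤ)).natAbs * (z j).natAbs := Nat.le_mul_of_pos_right _ (by omega)
      _ = ((((m:ℕ):ℤ)) * z j).natAbs := (Int.natAbs_mul _ _).symm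
      _ = (∑ t, z t * δ' t).natAbs := by rw [hdotδ']; rw [Int.natAbs_neg]
      _ ≤ Az * ZnMorse.L1 δ' := ZnMorse.dot_natAbs_le z δ'
  -- contradiction
  have hr1 : ((m:ℕ):ℝ) ≤ ((Az * ZnMorse.L1 δ' : ℕ) : ℝ) := by exact_mod_cast hmlow
  have hr2 : ((Az * ZnMorse.L1 δ' : ℕ) : ℝ) = (Az:ℝ) * ((ZnMorse.L1 δ' : ℕ) : ℝ) := by push_cast; ring
  have hr3 : (Az:ℝ) * ((ZnMorse.L1 δ' : ℕ) : ℝ) ≤ (Az:ℝ) * M :=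
    mul_le_mul_of_nonneg_left hpd (by positivity)
  have hr4 : (Az:ℝ) * M ≤ max ((Az:ℝ) * M) 0 := le_max_left _ _
  linarith
end

section
/- Let G be a group with a finite graph-of-groups style setup: a G-action on a simplicial tree T with finitely many vertex orbits, representatives v₁,…,v_k, stabilizer family P = {Stab(v₁),…,Stab(v_k)}, all edge stabilizers infinite, and the action acylindrical. Then the map ψ : T⁽⁰⁾ → K(G,P)⁽⁰⁾, ψ(g·vᵢ) = g·Stab(vᵢ), extends to a quasi-isometry between the one-skeleton of T and the one-skeleton of the coset intersection complex K(G,P). In particular, d_K(ψ(u), ψ(w)) ≤ d_T(u,w) ≤ R·d_K(ψ(u), ψ(w)) for all vertices u, w of T, where R is the acylindricity constant. -/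
open MulAction in
/-- For a cocompact acylindrical action on a simplicial tree with
infinite edge stabilizers, the map `g • vᵢ ↦ g Stab(vᵢ)` is a bijective
quasi-isometry from the vertices of `T` to the vertices of the coset
intersection complex, with `d_K ≤ d_T ≤ R · d_K`. -/
theorem tree_qi_coset_intersection_complex
    {G V : Type*} [Group G] [MulAction G V] (T : SimpleGraph V)
    (hconn : T.Connected) (hacyc : T.IsAcyclic)
    (hadj : ∀ (g : G) (u w : V), T.Adj u w → T.Adj (g • u) (g • w))
    (k : ℕ) (v : Fin k → V)
    (hcover : ∀ u : V, ∃ (i : Fin k) (g : G), g • v i = u)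
    (hdistinct : ∀ (i j : Fin k) (g : G), g • v i = v j → i = j)
    (hedge : ∀ u w : V, T.Adj u w →
      ((stabilizer G u ⊓ stabilizer G w : Subgroup G) : Set G).Infinite)
    (M N : ℕ)
    (hacyl : ∀ x y : V, M ≤ T.dist x y →
      ∃ s : Finset G, {g : G | g • x = x ∧ g • y = y} ⊆ ↑s ∧ s.card ≤ N) :
    -- the coset intersection complex on the cosets `g Stab(vᵢ)`
    ∀ K : SimpleGraph ((i : Fin k) × (G ⧸ stabilizer G (v i))),
      K = SimpleGraph.fromRel (fun x y =>
        ((stabilizer G (x.2.out • v x.1) ⊓ stabilizer G (y.2.out • v y.1) :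
          Subgroup G) : Set G).Infinite) →
      ∃ ψ : V → (i : Fin k) × (G ⧸ stabilizer G (v i)),
        (∀ (i : Fin k) (g : G), ψ (g • v i) = ⟨i, QuotientGroup.mk g⟩) ∧
        Function.Bijective ψ ∧
        ∃ R : ℕ, ∀ u w : V,
          K.dist (ψ u) (ψ w) ≤ T.dist u w ∧
            T.dist u w ≤ R * K.dist (ψ u) (ψ w) := by
  intro K hK
  subst hK
  classical
  -- helper: equality of the sigma pairs
  have hsig : ∀ (i j : Fin k) (g h : G), g • v i = h • v j →
      (⟨i, QuotientGroup.mk g⟩ : (i : Fin k) × (G ⧸ stabilizer G (v i))) =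
        ⟨j, QuotientGroup.mk h⟩ := by
    intro i j g h heq
    have hij : i = j := hdistinct i j (h⁻¹ * g) (by rw [mul_smul, heq, inv_smul_smul])
    subst hij
    refine congrArg (Sigma.mk i) ?_
    rw [QuotientGroup.eq]
    rw [mem_stabilizer_iff, mul_smul, ← heq, inv_smul_smul]
  -- the map ψ
  set ψ : V → (i : Fin k) × (G ⧸ stabilizer G (v i)) :=
    fun u => ⟨(hcover u).choose, QuotientGroup.mk (hcover u).choose_spec.choose⟩ with hψdef
  have hpsi : ∀ (i : Fin k) (g : G), ψ (g • v i) = ⟨i, QuotientGroup.mk g⟩ := by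
    intro i g
    exact hsig _ _ _ _ (hcover (g • v i)).choose_spec.choose_spec
  have hinj : Function.Injective ψ := by
    intro a b hab
    obtain ⟨i, g, rfl⟩ := hcover a
    obtain ⟨j, h, rfl⟩ := hcover b
    rw [hpsi, hpsi] at hab
    have hij : i = j := congrArg Sigma.fst hab
    subst hij
    injection hab with h1 h2
    have hab' : (QuotientGroup.mk g : G ⧸ stabilizer G (v i)) = QuotientGroup.mk h := h2
    have hm : (g⁻¹ * h) • v i = v i := mem_stabilizer_iff.mp (QuotientGroup.eq.mp hab')
    have : g • (g⁻¹ * h) • v i = g • v i := by rw [hm]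
    rw [← mul_smul, mul_inv_cancel_left] at this
    rw [this]
  have hsurj : Function.Surjective ψ := by
    rintro ⟨i, q⟩
    induction q using QuotientGroup.induction_on with
    | H g => exact ⟨g • v i, hpsi i g⟩
  -- out representatives act correctly
  have hout : ∀ (i : Fin k) (g : G),
      (QuotientGroup.mk g : G ⧸ stabilizer G (v i)).out • v i = g • v i := by
    intro i g
    have h1 : (QuotientGroup.mk ((QuotientGroup.mk g : G ⧸ stabilizer G (v i)).out) :
        G ⧸ stabilizer G (v i)) = QuotientGroup.mk g := Quotient.out_eq _
    have hm := mem_stabilizer_iff.mp (QuotientGroup.eq.mp h1)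
    rw [mul_smul] at hm
    calc (QuotientGroup.mk g : G ⧸ stabilizer G (v i)).out • v i
        = (QuotientGroup.mk g : G ⧸ stabilizer G (v i)).out •
            ((QuotientGroup.mk g : G ⧸ stabilizer G (v i)).out⁻¹ • g • v i) := by rw [hm]
      _ = g • v i := by rw [smul_inv_smul]
  have hphi : ∀ a : V, (ψ a).2.out • v (ψ a).1 = a := by
    intro a
    obtain ⟨i, g, rfl⟩ := hcover a
    rw [hpsi]
    exact hout i g
  -- adjacency transfer T → K
  set r : ((i : Fin k) × (G ⧸ stabilizer G (v i))) →
      ((i : Fin k) × (G ⧸ stabilizer G (v i))) → Prop := fun x y =>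
    ((stabilizer G (x.2.out • v x.1) ⊓ stabilizer G (y.2.out • v y.1) :
      Subgroup G) : Set G).Infinite with hrdef
  have hKadj : ∀ a b : V, T.Adj a b → (SimpleGraph.fromRel r).Adj (ψ a) (ψ b) := by
    intro a b hab
    rw [SimpleGraph.fromRel_adj]
    refine ⟨fun hc => hab.ne (hinj hc), Or.inl ?_⟩
    rw [hrdef]
    simp only
    rw [hphi a, hphi b]
    exact hedge a b hab
  set f : T →g SimpleGraph.fromRel r := ⟨ψ, fun h => hKadj _ _ h⟩ with hfdef
  -- adjacency in K bounds tree distance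
  have hadjdist : ∀ x y, (SimpleGraph.fromRel r).Adj x y →
      T.dist (x.2.out • v x.1) (y.2.out • v y.1) ≤ M := by
    intro x y hxy
    rw [SimpleGraph.fromRel_adj] at hxy
    have hinf : ((stabilizer G (x.2.out • v x.1) ⊓ stabilizer G (y.2.out • v y.1) :
        Subgroup G) : Set G).Infinite := by
      rcases hxy.2 with h | h
      · exact h
      · simp only [hrdef] at h
        rwa [inf_comm] at h
    by_contra hle
    obtain ⟨s, hs, _⟩ := hacyl _ _ (le_of_lt (lt_of_not_ge hle))
    refine hinf (Set.Finite.subset s.finite_toSet ?_)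
    intro g hg
    have hg' := Subgroup.mem_inf.mp hg
    exact hs ⟨mem_stabilizer_iff.mp hg'.1, mem_stabilizer_iff.mp hg'.2⟩
  -- walk bound in K
  have hwalk : ∀ (x y : (i : Fin k) × (G ⧸ stabilizer G (v i)))
      (q : (SimpleGraph.fromRel r).Walk x y),
      T.dist (x.2.out • v x.1) (y.2.out • v y.1) ≤ M * q.length := by
    intro x y q
    induction q with
    | nil => simp
    | @cons a b c h q ih =>
      calc T.dist (a.2.out • v a.1) (c.2.out • v c.1)
          ≤ T.dist (a.2.out • v a.1) (b.2.out • v b.1) +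
            T.dist (b.2.out • v b.1) (c.2.out • v c.1) := hconn.dist_triangle
        _ ≤ M + M * q.length := add_le_add (hadjdist _ _ h) ih
        _ = M * (SimpleGraph.Walk.cons h q).length := by
            rw [SimpleGraph.Walk.length_cons]; ring
  refine ⟨ψ, hpsi, ⟨hinj, hsurj⟩, M, ?_⟩
  intro u w
  obtain ⟨p, hp⟩ := hconn.exists_walk_length_eq_dist u w
  constructor
  · calc (SimpleGraph.fromRel r).dist (ψ u) (ψ w) ≤ (p.map f).length :=
        SimpleGraph.dist_le _
      _ = T.dist u w := by rw [SimpleGraph.Walk.length_map, hp]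
  · have hreach : (SimpleGraph.fromRel r).Reachable (ψ u) (ψ w) := ⟨p.map f⟩
    obtain ⟨q, hq⟩ := hreach.exists_walk_length_eq_dist
    have := hwalk _ _ q
    rw [hphi u, hphi w, hq] at this
    exact this
end
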